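/- Let G be a 2-node-connected series-parallel graph and let u,v be distinct nodes of G. The graph G+uv obtained by adding the edge uv is series-parallel if and only if uv is already an edge of G, or {u,v} is a 2-cut of G (i.e., G−{u,v} is disconnected). -/

import Mathlib

/-!
If `{u, v}` separates `G`, let `B` be a `K₄` model of `G + uv`. Its branch sets missing `u` and `v`
are pairwise joined by edges of `G - {u, v}`, so they lie in one component of `G - {u, v}` and avoid
another one, `D`. Cutting every branch set down to the side away from `D`, together with `u` and
`v`, still gives a model of `G + uv`; since `G` is 2-connected, `D` is adjacent to both `u` and `v`,
so adding `D` to the branch set of `u` replaces the edge `uv` by a path of `G`.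

Conversely, if `uv` is not an edge and `G - {u, v}` is connected, Whitney's theorem gives two
internally disjoint `u`-`v` paths with nonempty interiors `I₁`, `I₂`. Growing `I₁` inside
`G - {u, v} - I₂` until it touches `I₂` gives a set `X`, and `{u}, {v}, X, I₂` are the branch sets
of a `K₄` minor of `G + uv`.
-/

open scoped Classical

namespace FlowCut

variable {V : Type} [Fintype V] [DecidableEq V]

/-- `G` has a `K₄` minor, witnessed by four disjoint nonempty connected branch sets that are
pairwise joined by an edge of `G`.  A graph is series-parallel iff it has no `K₄` minor. -/
def HasK4Minor (G : SimpleGraph V) : Prop :=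
  ∃ B : Fin 4 → Finset V,
    (∀ i, (B i).Nonempty) ∧
    (∀ i j, i ≠ j → Disjoint (B i) (B j)) ∧
    (∀ i, (G.induce (↑(B i) : Set V)).Connected) ∧
    (∀ i j, i ≠ j → ∃ a ∈ B i, ∃ b ∈ B j, G.Adj a b)

/-- `G` is 2-node-connected: it has at least 3 nodes, is connected, and stays connected
after deleting any single node. -/
def TwoConnected (G : SimpleGraph V) : Prop :=
  3 ≤ Fintype.card V ∧ G.Connected ∧ ∀ v : V, (G.induce {u : V | u ≠ v}).Connected

end FlowCut

namespace SimpleGraph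

variable {V : Type*} {G H : SimpleGraph V} {s t σ : Set V} {u v w x y z a b c : V}

def ReachableIn (G : SimpleGraph V) (s : Set V) (x y : V) : Prop :=
  ∃ p : G.Walk x y, ∀ z ∈ p.support, z ∈ s

def PreconnectedIn (G : SimpleGraph V) (s : Set V) : Prop :=
  ∀ x ∈ s, ∀ y ∈ s, G.ReachableIn s x y

namespace ReachableIn

lemma refl (hx : x ∈ s) : G.ReachableIn s x x := ⟨.nil, by simpa⟩

lemma symm (h : G.ReachableIn s x y) : G.ReachableIn s y x :=
  let ⟨p, hp⟩ := h; ⟨p.reverse, by simpa using hp⟩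

lemma trans (h : G.ReachableIn s x y) (h' : G.ReachableIn s y z) : G.ReachableIn s x z := by
  obtain ⟨p, hp⟩ := h
  obtain ⟨q, hq⟩ := h'
  exact ⟨p.append q, fun w hw => ((Walk.mem_support_append_iff p q).1 hw).elim (hp w) (hq w)⟩

lemma mono (hst : s ⊆ t) (h : G.ReachableIn s x y) : G.ReachableIn t x y :=
  let ⟨p, hp⟩ := h; ⟨p, fun z hz => hst (hp z hz)⟩

lemma mono_graph (hGH : G ≤ H) (h : G.ReachableIn s x y) : H.ReachableIn s x y :=
  let ⟨p, hp⟩ := h; ⟨p.mapLe hGH, by simpa using hp⟩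

lemma mem_right (h : G.ReachableIn s x y) : y ∈ s :=
  let ⟨p, hp⟩ := h; hp y p.end_mem_support

end ReachableIn

lemma Adj.reachableIn (h : G.Adj x y) (hx : x ∈ s) (hy : y ∈ s) : G.ReachableIn s x y :=
  ⟨h.toWalk, by simp [hx, hy]⟩

lemma PreconnectedIn.mono_graph (hGH : G ≤ H) (hs : G.PreconnectedIn s) : H.PreconnectedIn s :=
  fun x hx y hy => (hs x hx y hy).mono_graph hGH

lemma preconnectedIn_singleton : G.PreconnectedIn {x} := by
  rintro _ rfl _ rfl
  exact .refl rfl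

lemma preconnectedIn_of_forall_reachableIn (h : ∀ z ∈ s, G.ReachableIn s z x) :
    G.PreconnectedIn s :=
  fun a ha b hb => (h a ha).trans (h b hb).symm

lemma preconnectedIn_iff_preconnected_induce : G.PreconnectedIn s ↔ (G.induce s).Preconnected := by
  have hle {x y : V} (p : G.Walk x y) :
      p.toSubgraph ≤ (⊤ : G.Subgraph).induce s ↔ ∀ z ∈ p.support, z ∈ s :=
    ⟨fun h z hz => Subgraph.verts_mono h (p.mem_verts_toSubgraph.2 hz),
      fun h => p.toSubgraph_le_induce_support.trans (Subgraph.induce_mono_right h)⟩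
  rw [preconnected_induce_iff, Subgraph.preconnected_iff_forall_exists_walk_subgraph]
  simp only [Subgraph.induce_verts, hle]
  exact ⟨fun h x y hx hy => h x hx y hy, fun h x hx y hy => h hx hy⟩

lemma connected_induce_iff_preconnectedIn :
    (G.induce s).Connected ↔ s.Nonempty ∧ G.PreconnectedIn s := by
  rw [connected_iff, preconnectedIn_iff_preconnected_induce, and_comm, Set.nonempty_coe_sort]

lemma Walk.preconnectedIn_support (p : G.Walk u v) : G.PreconnectedIn {z | z ∈ p.support} :=
  preconnectedIn_iff_preconnected_induce.2 p.connected_induce_support.preconnected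

def componentIn (G : SimpleGraph V) (s : Set V) (x : V) : Set V := {y | G.ReachableIn s x y}

lemma componentIn_subset : G.componentIn s x ⊆ s := fun _ h => h.mem_right

lemma mem_componentIn_of_adj (ha : a ∈ G.componentIn s x) (hab : G.Adj a b) (hb : b ∈ s) :
    b ∈ G.componentIn s x :=
  ReachableIn.trans ha (hab.reachableIn (componentIn_subset ha) hb)

lemma preconnectedIn_componentIn : G.PreconnectedIn (G.componentIn s x) := by
  refine preconnectedIn_of_forall_reachableIn (x := x) fun y ⟨p, hp⟩ => ReachableIn.symm ?_
  exact ⟨p, fun z hz =>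
    ⟨p.takeUntil z hz, fun w hw => hp w (p.support_takeUntil_subset_support hz hw)⟩⟩

lemma exists_adj_componentIn (hx : x ∈ s) (hy : y ∉ s) (h : G.ReachableIn (s ∪ t) x y) :
    ∃ a ∈ G.componentIn s x, ∃ b ∈ t, G.Adj a b := by
  obtain ⟨p, hp⟩ := h
  obtain ⟨d, hd, hd₁, hd₂⟩ := p.exists_boundary_dart (G.componentIn s x) (ReachableIn.refl hx)
    fun h => hy (componentIn_subset h)
  refine ⟨d.fst, hd₁, d.snd, ?_, d.adj⟩
  refine (hp _ (p.dart_snd_mem_support_of_mem_darts hd)).resolve_left fun hs => hd₂ ?_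
  exact mem_componentIn_of_adj hd₁ d.adj hs

lemma exists_adj_componentIn_of_connected (hv : (G.induce {x | x ≠ v}).Connected) (huv : u ≠ v)
    (hy : y ∈ {w | w ≠ u ∧ w ≠ v}) :
    ∃ d ∈ G.componentIn {w | w ≠ u ∧ w ≠ v} y, G.Adj u d := by
  have hyu := (preconnectedIn_iff_preconnected_induce.2 hv.preconnected) y hy.2 u huv
  have hsub : {x | x ≠ v} ⊆ {w | w ≠ u ∧ w ≠ v} ∪ {u} := fun x hx => by
    by_cases hxu : x = u
    exacts [.inr hxu, .inl ⟨hxu, hx⟩]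
  obtain ⟨d, hd, _, rfl, hdu⟩ := exists_adj_componentIn hy (fun h => h.1 rfl) (hyu.mono hsub)
  exact ⟨d, hd, hdu.symm⟩

/-- For `σ ⊆ s`: `σ` is a union of components of `G[s]`. -/
def IsClosedIn (G : SimpleGraph V) (s σ : Set V) : Prop :=
  ∀ a ∈ σ, ∀ b ∈ s, G.Adj a b → b ∈ σ

lemma IsClosedIn.mem_insert_insert (hσ : G.IsClosedIn {w | w ≠ u ∧ w ≠ v} σ) (hb : b ∈ σ)
    (hab : G.Adj a b) : a ∈ insert u (insert v σ) := by
  by_cases ha : a ≠ u ∧ a ≠ v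
  · exact .inr (.inr (hσ b hb a ha hab.symm))
  · rw [not_and_or, not_not, not_not] at ha
    rcases ha with rfl | rfl
    exacts [.inl rfl, .inr (.inl rfl)]

lemma ReachableIn.exists_exit (hσ : G.IsClosedIn s σ) (hx : x ∈ σ) (hy : y ∉ σ)
    (h : G.ReachableIn t x y) : ∃ w ∈ t, w ∉ s ∧ G.ReachableIn (t ∩ insert w σ) x w := by
  obtain ⟨p, hp⟩ := h
  induction p with
  | nil => exact absurd hx hy
  | @cons x b y hxb q ih =>
    have hxt : x ∈ t := hp x (by simp)
    have hbt : b ∈ t := hp b (by simp)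
    by_cases hb : b ∈ σ
    · obtain ⟨w, hwt, hws, hbw⟩ := ih hb hy fun z hz => hp z (by simp [hz])
      have hxb' : G.ReachableIn (t ∩ insert w σ) x b :=
        hxb.reachableIn ⟨hxt, .inr hx⟩ ⟨hbt, .inr hb⟩
      exact ⟨w, hwt, hws, hxb'.trans hbw⟩
    · exact ⟨b, hbt, fun hbs => hb (hσ x hx b hbs hxb),
        hxb.reachableIn ⟨hxt, .inr hx⟩ ⟨hbt, .inl rfl⟩⟩

lemma PreconnectedIn.subset_of_isClosedIn (ht : G.PreconnectedIn t) (hts : t ⊆ s)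
    (hσ : G.IsClosedIn s σ) (hx : x ∈ t) (hxσ : x ∈ σ) : t ⊆ σ := by
  intro y hy
  by_contra hyσ
  obtain ⟨w, hwt, hws, -⟩ := (ht x hx y hy).exists_exit hσ hxσ hyσ
  exact hws (hts hwt)

/-- Cutting a connected set along the separation `{u, v}` and keeping the side `σ` leaves it
connected, provided `uv` is an edge. -/
lemma PreconnectedIn.inter_insert_insert (hs : G.PreconnectedIn s) (huv : G.Adj u v)
    (hσ : G.IsClosedIn {w | w ≠ u ∧ w ≠ v} σ) (hσuv : σ ⊆ {w | w ≠ u ∧ w ≠ v})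
    (hc : c ∈ s) (hcuv : c = u ∨ c = v) : G.PreconnectedIn (s ∩ insert u (insert v σ)) := by
  set T := s ∩ insert u (insert v σ)
  have hend : ∀ w ∈ s, w = u ∨ w = v → G.ReachableIn T w c := by
    have hu : u ∈ s → v ∈ s → G.ReachableIn T u v := fun hus hvs =>
      huv.reachableIn ⟨hus, .inl rfl⟩ ⟨hvs, .inr (.inl rfl)⟩
    have hmem : ∀ w ∈ s, w = u ∨ w = v → w ∈ T := by
      rintro w hws (rfl | rfl)
      exacts [⟨hws, .inl rfl⟩, ⟨hws, .inr (.inl rfl)⟩]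
    rintro w hws (rfl | rfl) <;> rcases hcuv with rfl | rfl
    exacts [.refl (hmem _ hc (.inl rfl)), hu hws hc, (hu hc hws).symm,
      .refl (hmem _ hc (.inr rfl))]
  refine preconnectedIn_of_forall_reachableIn (x := c) fun z hz => ?_
  obtain ⟨hzs, hzT⟩ := hz
  rcases hzT with rfl | rfl | hzσ
  · exact hend _ hzs (.inl rfl)
  · exact hend _ hzs (.inr rfl)
  · have hcσ : c ∉ σ := fun h => by rcases hcuv with rfl | rfl <;> simpa using hσuv h
    obtain ⟨w, hws, hwuv, hzw⟩ := (hs z hzs c hc).exists_exit hσ hzσ hcσ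
    have hwuv' : w = u ∨ w = v := by by_contra! h; exact hwuv h
    have hwT : insert w σ ⊆ insert u (insert v σ) := by
      rcases hwuv' with rfl | rfl
      exacts [Set.insert_subset_insert (Set.subset_insert _ _), Set.subset_insert _ _]
    exact (hzw.mono (Set.inter_subset_inter_right s hwT)).trans (hend w hws hwuv')

lemma Adj.of_sup_edge (h : (G ⊔ edge u v).Adj a b) (hbu : b ≠ u) (hbv : b ≠ v) : G.Adj a b := by
  rw [sup_adj, edge_adj] at h
  rcases h with h | ⟨⟨-, rfl⟩ | ⟨-, rfl⟩, -⟩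
  exacts [h, absurd rfl hbv, absurd rfl hbu]

lemma IsClosedIn.sup_edge (hσ : G.IsClosedIn {w | w ≠ u ∧ w ≠ v} σ) :
    (G ⊔ edge u v).IsClosedIn {w | w ≠ u ∧ w ≠ v} σ :=
  fun a ha b hb hab => hσ a ha b hb (hab.of_sup_edge hb.1 hb.2)

lemma ReachableIn.of_sup_edge (huv : u ∈ s → v ∈ s → G.ReachableIn s u v)
    (h : (G ⊔ edge u v).ReachableIn s x y) : G.ReachableIn s x y := by
  obtain ⟨p, hp⟩ := h
  induction p with
  | nil => exact .refl (hp _ (by simp))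
  | @cons a b c hab q ih =>
    have ha : a ∈ s := hp a (by simp)
    have hb : b ∈ s := hp b (by simp)
    refine .trans ?_ (ih fun z hz => hp z (by simp [hz]))
    rw [sup_adj, edge_adj] at hab
    rcases hab with hab | ⟨⟨rfl, rfl⟩ | ⟨rfl, rfl⟩, -⟩
    exacts [hab.reachableIn ha hb, huv ha hb, (huv hb ha).symm]

lemma PreconnectedIn.of_sup_edge (huv : u ∈ s → v ∈ s → G.ReachableIn s u v)
    (hs : (G ⊔ edge u v).PreconnectedIn s) : G.PreconnectedIn s :=
  fun x hx y hy => (hs x hx y hy).of_sup_edge huv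

namespace Walk

def InternallyDisjoint (p q : G.Walk u v) : Prop :=
  ∀ z ∈ p.support, z ∈ q.support → z = u ∨ z = v

lemma InternallyDisjoint.symm {p q : G.Walk u v} (h : p.InternallyDisjoint q) :
    q.InternallyDisjoint p :=
  fun z hq hp => h z hp hq

lemma exists_internallyDisjoint_of_detour {P₁ P₂ : G.Walk u w} (hP₁ : P₁.IsPath)
    (hP : P₁.InternallyDisjoint P₂) (hwv : G.Adj w v) (hx : x ∈ P₁.support) (Q : G.Walk v x)
    (hQw : w ∉ Q.support) (hQ : ∀ z ∈ Q.support, z ∈ P₁.support ∨ z ∈ P₂.support → z = x) :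
    ∃ p q : G.Walk u v, p.IsPath ∧ q.IsPath ∧ p.InternallyDisjoint q := by
  have hxw : x ≠ w := by rintro rfl; exact hQw Q.end_mem_support
  have hwP : w ∉ (P₁.takeUntil x hx).support := endpoint_notMem_support_takeUntil hP₁ hx hxw.symm
  refine ⟨((P₁.takeUntil x hx).append Q.reverse).bypass, (P₂.concat hwv).bypass,
    bypass_isPath _, bypass_isPath _, fun z hzp hzq => ?_⟩
  replace hzp := support_bypass_subset_support _ hzp
  replace hzq := support_bypass_subset_support _ hzq
  rw [mem_support_append_iff, support_reverse, List.mem_reverse] at hzp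
  rw [support_concat, List.mem_append, List.mem_singleton] at hzq
  rcases hzq with hz₂ | rfl
  · rcases hzp with hz₁ | hzQ
    · refine (hP z (support_takeUntil_subset_support _ hx hz₁) hz₂).imp_right fun hzw => ?_
      exact absurd (hzw ▸ hz₁) hwP
    · obtain rfl := hQ z hzQ (.inr hz₂)
      exact .inl ((hP z hx hz₂).resolve_right hxw)
  · exact .inr rfl

end Walk

/-- Whitney's theorem, by induction along a walk from `v` to `u`: the two paths to the next
vertex `w` are completed by the edge `wv` and by a detour from `v` avoiding `w`. -/
theorem exists_internallyDisjoint_paths (hdel : ∀ w, (G.induce {x | x ≠ w}).Connected)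
    (h : G.Reachable u v) (huv : u ≠ v) :
    ∃ p q : G.Walk u v, p.IsPath ∧ q.IsPath ∧ p.InternallyDisjoint q := by
  obtain ⟨p⟩ := h.symm
  clear h
  induction p with
  | nil => exact absurd rfl huv
  | @cons v w u hvw q ih =>
    by_cases hwu : w = u
    · subst hwu
      exact ⟨hvw.symm.toWalk, hvw.symm.toWalk, by simpa using hvw.ne', by simpa using hvw.ne',
        fun z hz _ => by simpa using hz⟩
    obtain ⟨P₁, P₂, hP₁, hP₂, hP⟩ := ih (Ne.symm hwu)
    obtain ⟨Q, hQ⟩ :=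
      preconnectedIn_iff_preconnected_induce.2 (hdel w).preconnected v hvw.ne u (Ne.symm hwu)
    obtain ⟨x, hx, hxQ, hfirst⟩ := Q.exists_mem_support_forall_mem_support_imp_eq
      (P₁.support.toFinset ∪ P₂.support.toFinset) ⟨u, by simp⟩
    have hQw : w ∉ (Q.takeUntil x hxQ).support :=
      fun hw => hQ w (Q.support_takeUntil_subset_support hxQ hw) rfl
    have hfirst' : ∀ z ∈ (Q.takeUntil x hxQ).support, z ∈ P₁.support ∨ z ∈ P₂.support → z = x :=
      fun z hz hzP => hfirst z (by simpa using hzP) hz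
    rcases (by simpa using hx : x ∈ P₁.support ∨ x ∈ P₂.support) with hx₁ | hx₂
    · exact Walk.exists_internallyDisjoint_of_detour hP₁ hP hvw.symm hx₁ _ hQw hfirst'
    · exact Walk.exists_internallyDisjoint_of_detour hP₂ hP.symm hvw.symm hx₂ _ hQw
        fun z hz hzP => hfirst' z hz hzP.symm

lemma Walk.IsPath.exists_interior {p : G.Walk u v} (hp : p.IsPath) (huv : u ≠ v)
    (hnadj : ¬ G.Adj u v) : ∃ a b, ∃ r : G.Walk a b, G.Adj u a ∧ G.Adj b v ∧
      ∀ z ∈ r.support, z ∈ p.support ∧ z ≠ u ∧ z ≠ v := by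
  cases p with
  | nil => exact absurd rfl huv
  | @cons _ a _ hua p =>
    have hav : a ≠ v := by rintro rfl; exact hnadj hua
    obtain ⟨b, hvb, r, hr⟩ := Walk.exists_eq_cons_of_ne hav.symm p.reverse
    rw [Walk.cons_isPath_iff] at hp
    have hvr : v ∉ r.support := by
      have := hp.1.reverse.support_nodup
      rw [hr, Walk.support_cons, List.nodup_cons] at this
      exact this.1
    refine ⟨a, b, r.reverse, hua, hvb.symm, fun z hz => ?_⟩
    rw [Walk.support_reverse, List.mem_reverse] at hz
    have hzp : z ∈ p.support := by
      rw [← List.mem_reverse, ← Walk.support_reverse, hr, Walk.support_cons]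
      exact List.mem_cons_of_mem _ hz
    exact ⟨List.mem_cons_of_mem _ hzp, by rintro rfl; exact hp.2 hzp, by rintro rfl; exact hvr hz⟩

end SimpleGraph

namespace FlowCut

open SimpleGraph

section

variable {V : Type} {G H : SimpleGraph V} {B : Fin 4 → Set V} {D σ : Set V} {u v x : V}

structure IsK4Model (G : SimpleGraph V) (B : Fin 4 → Set V) : Prop where
  nonempty : ∀ i, (B i).Nonempty
  disjoint : ∀ i j, i ≠ j → Disjoint (B i) (B j)
  preconnectedIn : ∀ i, G.PreconnectedIn (B i)
  adj : ∀ i j, i ≠ j → ∃ a ∈ B i, ∃ b ∈ B j, G.Adj a b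

lemma hasK4Minor_iff [Finite V] : HasK4Minor G ↔ ∃ B, IsK4Model G B := by
  simp only [HasK4Minor, connected_induce_iff_preconnectedIn]
  constructor
  · rintro ⟨B, hne, hdisj, hconn, hadj⟩
    exact ⟨fun i => B i, fun i => by simpa using hne i, fun i j hij => by simpa using hdisj i j hij,
      fun i => (hconn i).2, hadj⟩
  · rintro ⟨B, hne, hdisj, hconn, hadj⟩
    refine ⟨fun i => (B i).toFinite.toFinset, fun i => ?_, fun i j hij => ?_, fun i => ?_,
      fun i j hij => ?_⟩ <;> simp only [Set.Finite.coe_toFinset, Set.Finite.toFinset_nonempty,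
        Set.Finite.disjoint_toFinset, Set.Finite.mem_toFinset]
    exacts [hne i, hdisj i j hij, ⟨hne i, hconn i⟩, hadj i j hij]

lemma IsK4Model.eq_of_mem (hB : IsK4Model G B) {i j : Fin 4} (hi : x ∈ B i) (hj : x ∈ B j) :
    i = j := by
  by_contra hij
  exact Set.disjoint_left.1 (hB.disjoint i j hij) hi hj

lemma IsK4Model.exists_notMem_notMem (hB : IsK4Model G B) (u v : V) :
    ∃ k, u ∉ B k ∧ v ∉ B k := by
  by_contra! h
  replace h k : u ∈ B k ∨ v ∈ B k := (em _).imp_right (h k)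
  rcases h 0 with h₀ | h₀ <;> rcases h 1 with h₁ | h₁ <;> rcases h 2 with h₂ | h₂ <;>
    first
    | exact absurd (hB.eq_of_mem h₀ h₁) (by decide)
    | exact absurd (hB.eq_of_mem h₀ h₂) (by decide)
    | exact absurd (hB.eq_of_mem h₁ h₂) (by decide)

lemma IsK4Model.of_lt (hne : ∀ i, (B i).Nonempty) (hconn : ∀ i, G.PreconnectedIn (B i))
    (hdisj : ∀ i j, i < j → Disjoint (B i) (B j))
    (hadj : ∀ i j, i < j → ∃ a ∈ B i, ∃ b ∈ B j, G.Adj a b) : IsK4Model G B := by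
  refine ⟨hne, fun i j hij => ?_, hconn, fun i j hij => ?_⟩ <;> rcases hij.lt_or_gt with h | h
  · exact hdisj i j h
  · exact (hdisj j i h).symm
  · exact hadj i j h
  · obtain ⟨a, ha, b, hb, hab⟩ := hadj j i h
    exact ⟨b, hb, a, ha, hab.symm⟩

lemma IsK4Model.restrict (hB : IsK4Model H B) (huv : H.Adj u v)
    (hσ : H.IsClosedIn {w | w ≠ u ∧ w ≠ v} σ) (hσuv : σ ⊆ {w | w ≠ u ∧ w ≠ v})
    (hpure : ∀ i, u ∉ B i → v ∉ B i → B i ⊆ σ) :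
    IsK4Model H fun i => B i ∩ insert u (insert v σ) := by
  set T := insert u (insert v σ)
  have hσT : σ ⊆ T := (Set.subset_insert _ _).trans (Set.subset_insert _ _)
  have hpure' : ∀ i, u ∉ B i → v ∉ B i → B i ∩ T = B i :=
    fun i hu hv => Set.inter_eq_left.2 ((hpure i hu hv).trans hσT)
  refine ⟨fun i => ?_, fun i j hij => (hB.disjoint i j hij).mono Set.inter_subset_left
    Set.inter_subset_left, fun i => ?_, fun i j hij => ?_⟩
  · by_cases hu : u ∈ B i
    · exact ⟨u, hu, .inl rfl⟩
    by_cases hv : v ∈ B i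
    · exact ⟨v, hv, .inr (.inl rfl)⟩
    rw [hpure' i hu hv]
    exact hB.nonempty i
  · by_cases hu : u ∈ B i
    · exact (hB.preconnectedIn i).inter_insert_insert huv hσ hσuv hu (.inl rfl)
    by_cases hv : v ∈ B i
    · exact (hB.preconnectedIn i).inter_insert_insert huv hσ hσuv hv (.inr rfl)
    rw [hpure' i hu hv]
    exact hB.preconnectedIn i
  · obtain ⟨a, ha, b, hb, hab⟩ := hB.adj i j hij
    by_cases hj : u ∉ B j ∧ v ∉ B j
    · have hbσ := hpure j hj.1 hj.2 hb
      exact ⟨a, ⟨ha, hσ.mem_insert_insert hbσ hab⟩, b, ⟨hb, hσT hbσ⟩, hab⟩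
    by_cases hi : u ∉ B i ∧ v ∉ B i
    · have haσ := hpure i hi.1 hi.2 ha
      exact ⟨a, ⟨ha, hσT haσ⟩, b, ⟨hb, hσ.mem_insert_insert haσ hab.symm⟩, hab⟩
    have hne : ∀ {x}, x ∈ B i → x ∈ B j → False := fun hi hj => hij (hB.eq_of_mem hi hj)
    rw [not_and_or, not_not, not_not] at hi hj
    rcases hi with hi | hi <;> rcases hj with hj | hj
    · exact (hne hi hj).elim
    · exact ⟨u, ⟨hi, .inl rfl⟩, v, ⟨hj, .inr (.inl rfl)⟩, huv⟩
    · exact ⟨v, ⟨hi, .inr (.inl rfl)⟩, u, ⟨hj, .inl rfl⟩, huv.symm⟩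
    · exact (hne hi hj).elim

/-- The branch set containing `u` absorbs `D`, which takes over the role of the edge `uv`. -/
lemma IsK4Model.reroute (hB : IsK4Model (G ⊔ edge u v) B) (hD : G.PreconnectedIn D)
    (hDB : ∀ i, Disjoint D (B i)) (hDu : ∃ d ∈ D, G.Adj u d) (hDv : ∃ d ∈ D, G.Adj v d) :
    IsK4Model G fun i => if u ∈ B i then B i ∪ D else B i := by
  obtain ⟨du, hdu, hudu⟩ := hDu
  obtain ⟨dv, hdv, hvdv⟩ := hDv
  have hsub : ∀ i, B i ⊆ if u ∈ B i then B i ∪ D else B i := fun i => by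
    split_ifs
    exacts [Set.subset_union_left, subset_rfl]
  have hDsub : ∀ {i}, u ∈ B i → D ⊆ if u ∈ B i then B i ∪ D else B i := fun hu => by
    rw [if_pos hu]
    exact Set.subset_union_right
  refine ⟨fun i => (hB.nonempty i).mono (hsub i), fun i j hij => ?_, fun i => ?_,
    fun i j hij => ?_⟩
  · have hB' := hB.disjoint i j hij
    split_ifs with hi hj hj
    · exact (hij (hB.eq_of_mem hi hj)).elim
    · exact hB'.union_left (hDB j)
    · exact hB'.union_right (hDB i).symm
    · exact hB'
  · split_ifs with hu
    · have hDu : ∀ d ∈ D, G.ReachableIn (B i ∪ D) d u := fun d hd =>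
        ((hD d hd du hdu).mono Set.subset_union_right).trans
          (hudu.symm.reachableIn (.inr hdu) (.inl hu))
      have hBu : ∀ x ∈ B i, G.ReachableIn (B i ∪ D) x u := fun x hx =>
        ((hB.preconnectedIn i x hx u hu).mono Set.subset_union_left).of_sup_edge fun _ hv =>
          (hDu dv hdv).symm.trans (hvdv.symm.reachableIn (.inr hdv) hv)
      exact preconnectedIn_of_forall_reachableIn fun z hz => hz.elim (hBu z) (hDu z)
    · exact (hB.preconnectedIn i).of_sup_edge fun hu' _ => absurd hu' hu
  · obtain ⟨a, ha, b, hb, hab⟩ := hB.adj i j hij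
    rw [sup_adj, edge_adj] at hab
    rcases hab with hab | ⟨⟨rfl, rfl⟩ | ⟨rfl, rfl⟩, -⟩
    · exact ⟨a, hsub i ha, b, hsub j hb, hab⟩
    · exact ⟨dv, hDsub ha hdv, b, hsub j hb, hvdv.symm⟩
    · exact ⟨a, hsub i ha, dv, hDsub hb hdv, hvdv⟩

lemma IsK4Model.subset_of_isClosedIn (hB : IsK4Model (G ⊔ edge u v) B)
    (hσ : G.IsClosedIn {w | w ≠ u ∧ w ≠ v} σ) {k : Fin 4} (hk : u ∉ B k ∧ v ∉ B k)
    (hkσ : (B k ∩ σ).Nonempty) : ∀ i, u ∉ B i → v ∉ B i → B i ⊆ σ := by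
  have hW : ∀ i, u ∉ B i → v ∉ B i → B i ⊆ {w | w ≠ u ∧ w ≠ v} := fun i hu hv z hz =>
    ⟨by rintro rfl; exact hu hz, by rintro rfl; exact hv hz⟩
  have hmeet : ∀ i, u ∉ B i → v ∉ B i → (B i ∩ σ).Nonempty → B i ⊆ σ := by
    rintro i hu hv ⟨z, hz, hzσ⟩
    exact ((hB.preconnectedIn i).of_sup_edge fun h => absurd h hu).subset_of_isClosedIn
      (hW i hu hv) hσ hz hzσ
  have hkσ' := hmeet k hk.1 hk.2 hkσ
  intro i hu hv
  obtain rfl | hik := eq_or_ne k i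
  · exact hkσ'
  obtain ⟨a, ha, b, hb, hab⟩ := hB.adj k i hik
  have hbW := hW i hu hv hb
  exact hmeet i hu hv ⟨b, hb, hσ a (hkσ' ha) b hbW (hab.of_sup_edge hbW.1 hbW.2)⟩

theorem not_hasK4Minor_sup_edge_of_not_connected [Finite V] (hsp : ¬ HasK4Minor G)
    (hu : (G.induce {x | x ≠ u}).Connected) (hv : (G.induce {x | x ≠ v}).Connected) (huv : u ≠ v)
    (hcut : ¬ (G.induce {w | w ≠ u ∧ w ≠ v}).Connected) : ¬ HasK4Minor (G ⊔ edge u v) := by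
  set W := {w : V | w ≠ u ∧ w ≠ v}
  intro hK
  obtain ⟨B, hB⟩ := hasK4Minor_iff.1 hK
  obtain ⟨k, huk, hvk⟩ := hB.exists_notMem_notMem u v
  obtain ⟨z, hzk⟩ := hB.nonempty k
  have hzW : z ∈ W := ⟨by rintro rfl; exact huk hzk, by rintro rfl; exact hvk hzk⟩
  obtain ⟨y, hyW, hzy⟩ : ∃ y ∈ W, ¬ G.ReachableIn W z y := by
    by_contra! h
    exact hcut (connected_induce_iff_preconnectedIn.2
      ⟨⟨z, hzW⟩, preconnectedIn_of_forall_reachableIn fun y hy => (h y hy).symm⟩)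
  set D := G.componentIn W y
  have hDW : D ⊆ W := componentIn_subset
  have hσ : G.IsClosedIn W (W \ D) := fun a ha b hb hab =>
    ⟨hb, fun hbD => ha.2 (mem_componentIn_of_adj hbD hab.symm ha.1)⟩
  have hpure := hB.subset_of_isClosedIn hσ ⟨huk, hvk⟩ ⟨z, hzk, hzW, fun hzD => hzy hzD.symm⟩
  have hB' := hB.restrict (by simp [edge_adj, huv]) hσ.sup_edge Set.sdiff_subset hpure
  have hDu := exists_adj_componentIn_of_connected hv huv hyW
  have hDv := exists_adj_componentIn_of_connected hu huv.symm ⟨hyW.2, hyW.1⟩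
  rw [show {w | w ≠ v ∧ w ≠ u} = W from Set.ext fun _ => and_comm] at hDv
  refine hsp (hasK4Minor_iff.2 ⟨_, hB'.reroute preconnectedIn_componentIn (fun i => ?_) hDu hDv⟩)
  refine Set.disjoint_left.2 fun d hd ⟨_, hdT⟩ => ?_
  rcases hdT with rfl | rfl | ⟨-, hdD⟩
  exacts [(hDW hd).1 rfl, (hDW hd).2 rfl, hdD hd]

lemma hasK4Minor_sup_edge_of_adj_sets [Finite V] {X Y : Set V} (huv : u ≠ v)
    (hX : G.PreconnectedIn X) (hY : G.PreconnectedIn Y) (hXW : X ⊆ {w | w ≠ u ∧ w ≠ v})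
    (hYW : Y ⊆ {w | w ≠ u ∧ w ≠ v}) (hXY : Disjoint X Y) (hXu : ∃ x ∈ X, G.Adj u x)
    (hYu : ∃ y ∈ Y, G.Adj u y) (hXv : ∃ x ∈ X, G.Adj v x) (hYv : ∃ y ∈ Y, G.Adj v y)
    (hXYadj : ∃ x ∈ X, ∃ y ∈ Y, G.Adj x y) : HasK4Minor (G ⊔ edge u v) := by
  have hle : G ≤ G ⊔ edge u v := le_sup_left
  obtain ⟨xu, hxu, huxu⟩ := hXu
  obtain ⟨yu, hyu, huyu⟩ := hYu
  obtain ⟨xv, hxv, hvxv⟩ := hXv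
  obtain ⟨yv, hyv, hvyv⟩ := hYv
  obtain ⟨x, hx, y, hy, hxy⟩ := hXYadj
  refine hasK4Minor_iff.2 ⟨![{u}, {v}, X, Y], .of_lt (fun i => ?_) (fun i => ?_)
    (fun i j hij => ?_) (fun i j hij => ?_)⟩
  · fin_cases i
    exacts [⟨u, rfl⟩, ⟨v, rfl⟩, ⟨x, hx⟩, ⟨y, hy⟩]
  · fin_cases i
    exacts [preconnectedIn_singleton, preconnectedIn_singleton, hX.mono_graph hle,
      hY.mono_graph hle]
  · fin_cases i <;> fin_cases j <;> try exact absurd hij (by decide)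
    exacts [Set.disjoint_singleton.2 huv, Set.disjoint_singleton_left.2 fun h => (hXW h).1 rfl,
      Set.disjoint_singleton_left.2 fun h => (hYW h).1 rfl,
      Set.disjoint_singleton_left.2 fun h => (hXW h).2 rfl,
      Set.disjoint_singleton_left.2 fun h => (hYW h).2 rfl, hXY]
  · fin_cases i <;> fin_cases j <;> try exact absurd hij (by decide)
    exacts [⟨u, rfl, v, rfl, by simp [edge_adj, huv]⟩, ⟨u, rfl, xu, hxu, hle huxu⟩,
      ⟨u, rfl, yu, hyu, hle huyu⟩, ⟨v, rfl, xv, hxv, hle hvxv⟩, ⟨v, rfl, yv, hyv, hle hvyv⟩,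
      ⟨x, hx, y, hy, hle hxy⟩]

theorem hasK4Minor_sup_edge_of_connected [Finite V] (hG : G.Connected)
    (hdel : ∀ w, (G.induce {x | x ≠ w}).Connected) (huv : u ≠ v) (hnadj : ¬ G.Adj u v)
    (hW : (G.induce {w | w ≠ u ∧ w ≠ v}).Connected) : HasK4Minor (G ⊔ edge u v) := by
  set W := {w : V | w ≠ u ∧ w ≠ v}
  obtain ⟨p, q, hp, hq, hpq⟩ := exists_internallyDisjoint_paths hdel (hG.preconnected u v) huv
  obtain ⟨a, b, r, hua, hbv, hr⟩ := hp.exists_interior huv hnadj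
  obtain ⟨a', b', r', hua', hbv', hr'⟩ := hq.exists_interior huv hnadj
  set Y := {z | z ∈ r'.support}
  set X := G.componentIn (W \ Y) a
  have hYW : Y ⊆ W := fun z hz => (hr' z hz).2
  have hrW : {z | z ∈ r.support} ⊆ W \ Y := fun z hz => ⟨(hr z hz).2, fun hzY => by
    rcases hpq z (hr z hz).1 (hr' z hzY).1 with h | h
    exacts [(hr z hz).2.1 h, (hr z hz).2.2 h]⟩
  have hrX : ∀ z ∈ r.support, z ∈ X :=
    fun z hz => (r.preconnectedIn_support a r.start_mem_support z hz).mono hrW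
  have haa' : G.ReachableIn W a a' := (connected_induce_iff_preconnectedIn.1 hW).2 a
    (hr a r.start_mem_support).2 a' (hYW r'.start_mem_support)
  exact hasK4Minor_sup_edge_of_adj_sets huv preconnectedIn_componentIn
    r'.preconnectedIn_support (componentIn_subset.trans Set.sdiff_subset) hYW
    (Set.disjoint_left.2 fun z hz => (componentIn_subset hz).2)
    ⟨a, hrX a r.start_mem_support, hua⟩ ⟨a', r'.start_mem_support, hua'⟩
    ⟨b, hrX b r.end_mem_support, hbv.symm⟩ ⟨b', r'.end_mem_support, hbv'.symm⟩
    (exists_adj_componentIn (hrW r.start_mem_support)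
      (fun h : a' ∈ W \ Y => h.2 r'.start_mem_support) (haa'.mono (Set.subset_sdiff_union W Y)))

end

variable {V : Type} [Fintype V] [DecidableEq V]

/-- In a 2-node-connected series-parallel graph, `G + uv` is
series-parallel iff `uv` is an edge of `G` or `{u, v}` is a 2-cut of `G`. -/
theorem fullyCompliant_iff_edge_or_twoCut
    (G : SimpleGraph V) (hsp : ¬ HasK4Minor G) (h2 : TwoConnected G)
    (u v : V) (huv : u ≠ v) :
    ¬ HasK4Minor (G ⊔ SimpleGraph.edge u v) ↔
      (G.Adj u v ∨ ¬ (G.induce {w : V | w ≠ u ∧ w ≠ v}).Connected) := by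
  obtain ⟨-, hG, hdel⟩ := h2
  constructor
  · intro hno
    by_contra! h
    exact hno (hasK4Minor_sup_edge_of_connected hG hdel huv h.1 h.2)
  · rintro (hadj | hcut)
    · rwa [sup_edge_of_adj G hadj]
    · exact not_hasK4Minor_sup_edge_of_not_connected hsp (hdel u) (hdel v) huv hcut

end FlowCut
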